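/- For a bounded linear operator T on a complex Hilbert space and any real number r ≥ 1, w(T)^{2r} ≤ (1/2)w(T²)^r + (1/4)‖(T*T)^r + (TT*)^r‖. -/

import Mathlib

open Complex

variable {H : Type*} [NormedAddCommGroup H] [InnerProductSpace ℂ H] [CompleteSpace H]

/-- The numerical radius `w(T) = sup {|⟨Tx,x⟩| : ‖x‖ = 1}`. -/
noncomputable def numRadius (T : H →L[ℂ] H) : ℝ :=
  sSup {r : ℝ | ∃ x : H, ‖x‖ = 1 ∧ r = ‖(inner ℂ (T x) x : ℂ)‖}

/-- The Crawford number `m(T) = inf {|⟨Tx,x⟩| : ‖x‖ = 1}`. -/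
noncomputable def crawford (T : H →L[ℂ] H) : ℝ :=
  sInf {r : ℝ | ∃ x : H, ‖x‖ = 1 ∧ r = ‖(inner ℂ (T x) x : ℂ)‖}

/-- The real part `Re(T) = (T + T*)/2`. -/
noncomputable def reOp (T : H →L[ℂ] H) : H →L[ℂ] H := (2 : ℂ)⁻¹ • (T + star T)

/-- The imaginary part `Im(T) = (T - T*)/(2i)`. -/
noncomputable def imOp (T : H →L[ℂ] H) : H →L[ℂ] H := (2 * Complex.I)⁻¹ • (T - star T)


/-!
For a unit vector `x` put `z = ⟪T x, x⟫`. Testing `z • T x + conj z • T† x` against `x` gives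
`4 |z|² ≤ ⟪(T†T + TT†) x, x⟫ + 2 |⟪T² x, x⟫|`. Raising this to the power `r`, convexity of
`t ↦ t ^ r` and McCarthy's inequality `⟪A x, x⟫ ^ r ≤ ⟪A ^ r x, x⟫` (for `A ≥ 0`, `r ≥ 1`) bound
`|z| ^ (2r)` by the right-hand side; then take the supremum over `x`.
-/

open scoped InnerProductSpace ComplexConjugate

namespace Real

lemma rpow_add_mul_rpow_sub_one_mul_sub_le {a t r : ℝ} (ha : 0 < a) (ht : 0 ≤ t) (hr : 1 ≤ r) :
    a ^ r + r * a ^ (r - 1) * (t - a) ≤ t ^ r := by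
  have hs : -1 ≤ t / a - 1 := by linarith [div_nonneg ht ha.le]
  have hbern := one_add_mul_self_le_rpow_one_add hs hr
  rw [add_sub_cancel, Real.div_rpow ht ha.le, le_div_iff₀ (by positivity)] at hbern
  rw [Real.rpow_sub_one ha.ne']
  refine le_trans (le_of_eq ?_) hbern
  field_simp

lemma add_div_two_rpow_le {u v r : ℝ} (hu : 0 ≤ u) (hv : 0 ≤ v) (hr : 1 ≤ r) :
    ((u + v) / 2) ^ r ≤ (u ^ r + v ^ r) / 2 := by
  have h := (convexOn_rpow hr).2 (Set.mem_Ici.2 hu) (Set.mem_Ici.2 hv)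
    (by norm_num : (0 : ℝ) ≤ 1 / 2) (by norm_num : (0 : ℝ) ≤ 1 / 2) (by norm_num)
  simp only [smul_eq_mul] at h
  rw [show (u + v) / 2 = 1 / 2 * u + 1 / 2 * v by ring]
  linarith

end Real

section InnerProductSpace

variable {𝕜 E : Type*} [RCLike 𝕜] [NormedAddCommGroup E] [InnerProductSpace 𝕜 E]

lemma re_inner_apply_self_nonneg {A : E →L[𝕜] E} (hA : 0 ≤ A) (x : E) :
    0 ≤ RCLike.re ⟪A x, x⟫_𝕜 :=
  ((ContinuousLinearMap.nonneg_iff_isPositive A).mp hA).re_inner_nonneg_left x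

lemma four_mul_norm_inner_sq_le {u v x : E} (hx : ‖x‖ ≤ 1) (h : ⟪v, x⟫_𝕜 = conj ⟪u, x⟫_𝕜) :
    4 * ‖⟪u, x⟫_𝕜‖ ^ 2 ≤ ‖u‖ ^ 2 + ‖v‖ ^ 2 + 2 * ‖⟪u, v⟫_𝕜‖ := by
  set z := ⟪u, x⟫_𝕜
  -- `⟪w, x⟫ = 2 |z|²`, while `‖w‖² = |z|² (‖u‖² + ‖v‖²) + 2 Re (conj z ^ 2 ⟪u, v⟫)`.
  set w := z • u + conj z • v
  have hw : ⟪w, x⟫_𝕜 = 2 * (‖z‖ ^ 2 : ℝ) := by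
    simp only [w, inner_add_left, inner_smul_left, h, RCLike.conj_conj]
    rw [show ⟪u, x⟫_𝕜 = z from rfl, RCLike.conj_mul, mul_comm z, RCLike.conj_mul]
    push_cast
    ring
  have hwx : 2 * ‖z‖ ^ 2 ≤ ‖w‖ := by
    calc 2 * ‖z‖ ^ 2 = ‖⟪w, x⟫_𝕜‖ := by rw [hw]; norm_cast; simp [abs_of_nonneg]
      _ ≤ ‖w‖ * ‖x‖ := norm_inner_le_norm w x
      _ ≤ ‖w‖ := mul_le_of_le_one_right (norm_nonneg w) hx
  have hw2 : ‖w‖ ^ 2 ≤ ‖z‖ ^ 2 * (‖u‖ ^ 2 + ‖v‖ ^ 2 + 2 * ‖⟪u, v⟫_𝕜‖) := by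
    have hcross : RCLike.re ⟪z • u, conj z • v⟫_𝕜 ≤ ‖z‖ ^ 2 * ‖⟪u, v⟫_𝕜‖ := by
      refine (RCLike.re_le_norm _).trans_eq ?_
      simp [inner_smul_left, inner_smul_right, norm_mul]
      ring
    rw [norm_add_sq (𝕜 := 𝕜), norm_smul, norm_smul, RCLike.norm_conj]
    nlinarith
  rcases (norm_nonneg z).eq_or_lt with hz | hz
  · rw [← hz, zero_pow two_ne_zero, mul_zero]
    positivity
  · nlinarith [pow_pos hz 2]

lemma norm_inner_apply_self_le (M : E →L[𝕜] E) {x : E} (hx : ‖x‖ ≤ 1) : ‖⟪M x, x⟫_𝕜‖ ≤ ‖M‖ :=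
  calc ‖⟪M x, x⟫_𝕜‖ ≤ ‖M x‖ * ‖x‖ := norm_inner_le_norm _ _
    _ ≤ ‖M‖ * ‖x‖ * ‖x‖ := by gcongr; exact M.le_opNorm x
    _ ≤ ‖M‖ * 1 * 1 := by gcongr
    _ = ‖M‖ := by ring

open ContinuousLinearMap in
lemma four_mul_norm_inner_apply_sq_le [CompleteSpace E] (T : E →L[𝕜] E) {x : E} (hx : ‖x‖ ≤ 1) :
    4 * ‖⟪T x, x⟫_𝕜‖ ^ 2 ≤ RCLike.re ⟪(star T * T) x, x⟫_𝕜 + RCLike.re ⟪(T * star T) x, x⟫_𝕜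
      + 2 * ‖⟪(T ^ 2) x, x⟫_𝕜‖ := by
  have h := four_mul_norm_inner_sq_le (u := T x) (v := adjoint T x) hx (by
    rw [adjoint_inner_left, inner_conj_symm])
  rwa [apply_norm_sq_eq_inner_adjoint_left, apply_norm_sq_eq_inner_adjoint_left, adjoint_adjoint,
    adjoint_inner_right, ← star_eq_adjoint] at h

end InnerProductSpace

section NumericalRadius

variable {E : Type*} [NormedAddCommGroup E] [InnerProductSpace ℂ E]

lemma numRadius_nonneg (T : E →L[ℂ] E) : 0 ≤ numRadius T :=
  Real.sSup_nonneg (by rintro _ ⟨x, -, rfl⟩; positivity)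

lemma norm_inner_le_numRadius (T : E →L[ℂ] E) {x : E} (hx : ‖x‖ = 1) :
    ‖⟪T x, x⟫_ℂ‖ ≤ numRadius T :=
  le_csSup ⟨‖T‖, by rintro _ ⟨y, hy, rfl⟩; exact norm_inner_apply_self_le T hy.le⟩ ⟨x, hx, rfl⟩

lemma numRadius_rpow_le {T : E →L[ℂ] E} {p K : ℝ} (hp : 0 < p) (hK : 0 ≤ K)
    (h : ∀ x : E, ‖x‖ = 1 → ‖⟪T x, x⟫_ℂ‖ ^ p ≤ K) : numRadius T ^ p ≤ K := by
  rw [← Real.le_rpow_inv_iff_of_pos (numRadius_nonneg T) hK hp]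
  refine Real.sSup_le ?_ (by positivity)
  rintro _ ⟨x, hx, rfl⟩
  exact (Real.le_rpow_inv_iff_of_pos (norm_nonneg _) hK hp).mpr (h x hx)

end NumericalRadius

open ContinuousLinearMap in
lemma le_re_inner_cfc_of_affine_le {A : H →L[ℂ] H} (hA : IsSelfAdjoint A) {f : ℝ → ℝ}
    (hf : ContinuousOn f (spectrum ℝ A)) {α β : ℝ} (h : ∀ t ∈ spectrum ℝ A, α + β * t ≤ f t)
    {x : H} (hx : ‖x‖ = 1) :
    α + β * RCLike.re ⟪A x, x⟫_ℂ ≤ RCLike.re ⟪cfc f A x, x⟫_ℂ := by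
  have hop : algebraMap ℝ _ α + β • A ≤ cfc f A := by
    calc algebraMap ℝ _ α + β • A = cfc (fun t => α + β * t) A := by
          rw [cfc_add .., cfc_const .., cfc_const_mul .., cfc_id' ..]
      _ ≤ cfc f A := cfc_mono h
  have hxx : RCLike.re ⟪x, x⟫_ℂ = 1 := by
    rw [inner_self_eq_norm_sq, hx, one_pow]
  have := re_inner_apply_self_nonneg (sub_nonneg.mpr hop) x
  simp only [sub_apply, add_apply, Algebra.algebraMap_eq_smul_one, smul_apply, one_apply_eq_self,
    inner_sub_left, inner_add_left] at this
  rw [RCLike.real_smul_eq_coe_smul (K := ℂ) α x, RCLike.real_smul_eq_coe_smul (K := ℂ) β (A x),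
    inner_smul_left, inner_smul_left] at this
  simp only [RCLike.conj_ofReal, map_sub, map_add, RCLike.re_ofReal_mul, hxx] at this
  linarith

lemma rpow_re_inner_le_re_inner_rpow {A : H →L[ℂ] H} (hA : 0 ≤ A) {r : ℝ} (hr : 1 ≤ r) {x : H}
    (hx : ‖x‖ = 1) : RCLike.re ⟪A x, x⟫_ℂ ^ r ≤ RCLike.re ⟪CFC.rpow A r x, x⟫_ℂ := by
  rcases (re_inner_apply_self_nonneg hA x).eq_or_lt with ha0 | hapos
  · rw [← ha0, Real.zero_rpow (by linarith)]
    exact re_inner_apply_self_nonneg CFC.rpow_nonneg x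
  · set a := RCLike.re ⟪A x, x⟫_ℂ
    -- the tangent line of `t ↦ t ^ r` at `a` lies below it on the spectrum of `A`
    have h := le_re_inner_cfc_of_affine_le (IsSelfAdjoint.of_nonneg hA) (f := fun t => t ^ r)
      (α := a ^ r - r * a ^ (r - 1) * a) (β := r * a ^ (r - 1))
      (fun t _ => (Real.continuousAt_rpow_const t r (Or.inr (by linarith))).continuousWithinAt)
      (fun t ht => by
        have := Real.rpow_add_mul_rpow_sub_one_mul_sub_le hapos
          (spectrum_nonneg_of_nonneg hA ht) hr
        linarith) hx
    rw [CFC.rpow_eq_pow, CFC.rpow_eq_cfc_real hA]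
    linarith

lemma norm_inner_rpow_le (T : H →L[ℂ] H) {r : ℝ} (hr : 1 ≤ r) {x : H} (hx : ‖x‖ = 1) :
    ‖⟪T x, x⟫_ℂ‖ ^ (2 * r) ≤
      (1/2) * numRadius (T ^ 2) ^ r
        + (1/4) * ‖CFC.rpow (star T * T) r + CFC.rpow (T * star T) r‖ := by
  set w := ‖⟪(T ^ 2) x, x⟫_ℂ‖
  set a := RCLike.re ⟪(star T * T) x, x⟫_ℂ
  set b := RCLike.re ⟪(T * star T) x, x⟫_ℂ
  have ha : 0 ≤ a := re_inner_apply_self_nonneg (star_mul_self_nonneg T) x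
  have hb : 0 ≤ b := re_inner_apply_self_nonneg (mul_star_self_nonneg T) x
  have hsq : ‖⟪T x, x⟫_ℂ‖ ^ 2 ≤ (w + (a + b) / 2) / 2 := by
    linarith [four_mul_norm_inner_apply_sq_le T hx.le]
  set P := CFC.rpow (star T * T) r
  set Q := CFC.rpow (T * star T) r
  have hsum : RCLike.re ⟪P x, x⟫_ℂ + RCLike.re ⟪Q x, x⟫_ℂ ≤ ‖P + Q‖ := by
    rw [← map_add, ← inner_add_left, ← add_apply]
    exact (RCLike.re_le_norm _).trans (norm_inner_apply_self_le _ hx.le)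
  calc ‖⟪T x, x⟫_ℂ‖ ^ (2 * r) = (‖⟪T x, x⟫_ℂ‖ ^ 2) ^ r := by
        rw [Real.rpow_mul (norm_nonneg _), Real.rpow_two]
    _ ≤ ((w + (a + b) / 2) / 2) ^ r := by gcongr
    _ ≤ (w ^ r + ((a + b) / 2) ^ r) / 2 :=
        Real.add_div_two_rpow_le (norm_nonneg _) (by positivity) hr
    _ ≤ (w ^ r + (a ^ r + b ^ r) / 2) / 2 := by gcongr; exact Real.add_div_two_rpow_le ha hb hr
    _ ≤ (numRadius (T ^ 2) ^ r + (RCLike.re ⟪P x, x⟫_ℂ + RCLike.re ⟪Q x, x⟫_ℂ) / 2) / 2 := by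
        gcongr
        · exact norm_inner_le_numRadius _ hx
        · exact rpow_re_inner_le_re_inner_rpow (star_mul_self_nonneg T) hr hx
        · exact rpow_re_inner_le_re_inner_rpow (mul_star_self_nonneg T) hr hx
    _ ≤ _ := by linarith

theorem stmt4 (T : H →L[ℂ] H) (r : ℝ) (hr : 1 ≤ r) :
    numRadius T ^ (2 * r) ≤
      (1/2) * numRadius (T ^ 2) ^ r
        + (1/4) * ‖CFC.rpow (star T * T) r + CFC.rpow (T * star T) r‖ := by
  have hT2 := numRadius_nonneg (T ^ 2)
  exact numRadius_rpow_le (by positivity) (by positivity) fun x hx => norm_inner_rpow_le T hr hx
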